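/- Let β > 1, λ', p positive integers, m = pλ', V = I_p ⊗ v^β and H = I_p ⊗ H^β as in the beta dual construction, and Φ an m×k matrix such that VΦ has full column rank. If x ∈ ℝ^k, q ∈ ℝ^m, u ∈ ℝ^m satisfy Φx − q = Hu, then ‖x − (VΦ)†Vq‖₂ ≤ (√p ‖u‖_∞ / σ_min(VΦ)) · β^{−λ'}. -/
import Mathlib

open Matrix MeasureTheory Finset
noncomputable section

/-- Euclidean norm of a vector. -/
def norm2 {ι : Type*} [Fintype ι] (v : ι → ℝ) : ℝ := Real.sqrt (∑ i, (v i)^2)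
/-- Sup norm of a vector. -/
def normInf {ι : Type*} (v : ι → ℝ) : ℝ := sSup {t | ∃ i, t = |v i|}
/-- ℓ∞ → ℓ2 operator norm. -/
def normInfTo2 {ι κ : Type*} [Fintype ι] [Fintype κ] (A : Matrix κ ι ℝ) : ℝ :=
  sSup {t | ∃ v : ι → ℝ, (∀ j, |v j| ≤ 1) ∧ t = norm2 (A.mulVec v)}
/-- ℓ2 → ℓ2 (spectral) operator norm. -/
def norm2To2 {ι κ : Type*} [Fintype ι] [Fintype κ] (A : Matrix κ ι ℝ) : ℝ :=
  sSup {t | ∃ v : ι → ℝ, norm2 v ≤ 1 ∧ t = norm2 (A.mulVec v)}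
/-- Smallest singular value. -/
def sigmaMin {ι κ : Type*} [Fintype ι] [Fintype κ] (A : Matrix κ ι ℝ) : ℝ :=
  sInf {t | ∃ v : ι → ℝ, norm2 v = 1 ∧ t = norm2 (A.mulVec v)}
/-- ℓ∞ → ℓ∞ operator norm (max absolute row sum). -/
def normInfInf {ι κ : Type*} [Fintype ι] (A : Matrix κ ι ℝ) : ℝ :=
  sSup {t | ∃ i, t = ∑ j, |A i j|}
/-- The alphabet 𝒜_{L,δ}: L points, spacing 2δ, symmetric about 0. -/
def alphabet (L : ℕ) (δ : ℝ) : Set ℝ := {w | ∃ j : Fin L, w = (2*(j:ℝ) - (L:ℝ) + 1) * δ}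
/-- Pseudoinverse of a full-column-rank matrix: A† = (AᵀA)⁻¹Aᵀ. -/
def pinv {ι : Type*} [Fintype ι] {k : ℕ} (A : Matrix ι (Fin k) ℝ) : Matrix (Fin k) ι ℝ :=
  (Aᵀ*A)⁻¹ * Aᵀ


lemma norm2_nonneg' {ι : Type*} [Fintype ι] (v : ι → ℝ) : 0 ≤ norm2 v := Real.sqrt_nonneg _

lemma norm2_pos' {ι : Type*} [Fintype ι] {v : ι → ℝ} (hv : v ≠ 0) : 0 < norm2 v := by
  have : ∃ i, v i ≠ 0 := by
    by_contra hc; push_neg at hc; exact hv (funext hc)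
  obtain ⟨i, hi⟩ := this
  exact Real.sqrt_pos.2
    (Finset.sum_pos' (fun j _ => sq_nonneg _) ⟨i, Finset.mem_univ i, by positivity⟩)

lemma norm2_smul' {ι : Type*} [Fintype ι] (t : ℝ) (v : ι → ℝ) :
    norm2 (t • v) = |t| * norm2 v := by
  unfold norm2
  rw [← Real.sqrt_sq_eq_abs, ← Real.sqrt_mul (sq_nonneg t), Finset.mul_sum]
  congr 1; apply Finset.sum_congr rfl; intro i _; simp [mul_pow]

lemma norm2_le' {ι : Type*} [Fintype ι] {v w : ι → ℝ} (h : ∑ i, (v i)^2 ≤ ∑ i, (w i)^2) :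
    norm2 v ≤ norm2 w := Real.sqrt_le_sqrt h

lemma proj_contract' {ι : Type*} [Fintype ι] (P : Matrix ι ι ℝ) (hsym : Pᵀ = P)
    (hidem : P * P = P) (c : ι → ℝ) : norm2 (P.mulVec c) ≤ norm2 c := by
  set w := P.mulVec c with hw
  have key : ∑ i, (w i)^2 = ∑ i, c i * w i := by
    have h1 : w ⬝ᵥ w = c ⬝ᵥ w := by
      calc w ⬝ᵥ w = w ᵥ* P ⬝ᵥ c := dotProduct_mulVec _ _ _
        _ = (Pᵀ *ᵥ w) ⬝ᵥ c := by rw [mulVec_transpose]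
        _ = w ⬝ᵥ c := by rw [hsym, hw, mulVec_mulVec, hidem]
        _ = c ⬝ᵥ w := dotProduct_comm _ _
    simpa [dotProduct, sq] using h1
  have cs := Finset.sum_mul_sq_le_sq_mul_sq Finset.univ c w
  rcases eq_or_lt_of_le (Finset.sum_nonneg (fun i _ => sq_nonneg (w i))) with h0 | h0
  · apply norm2_le'; rw [← h0]; exact Finset.sum_nonneg (fun i _ => sq_nonneg _)
  · apply norm2_le'
    have h2 : (∑ i, (w i)^2) * (∑ i, (w i)^2) ≤ (∑ i, (c i)^2) * ∑ i, (w i)^2 := by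
      calc (∑ i, (w i)^2) * (∑ i, (w i)^2) = (∑ i, c i * w i)^2 := by rw [key, sq]
        _ ≤ _ := cs
    exact le_of_mul_le_mul_right h2 h0

lemma norm2_eq_norm' {n : ℕ} (v : EuclideanSpace ℝ (Fin n)) :
    norm2 (fun i => v i) = ‖v‖ := by
  rw [EuclideanSpace.norm_eq]
  unfold norm2
  congr 1; apply Finset.sum_congr rfl; intro i _; rw [Real.norm_eq_abs, sq_abs]

lemma sigmaMin_pos' {p k : ℕ} (hk : 0 < k) (A : Matrix (Fin p) (Fin k) ℝ)
    (hfull : IsUnit (Aᵀ * A).det) : 0 < sigmaMin A := by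
  set E := EuclideanSpace ℝ (Fin k)
  have hcont : Continuous (fun v : E => norm2 (A.mulVec (fun i => v i))) := by
    unfold norm2
    apply Real.continuous_sqrt.comp
    apply continuous_finset_sum
    intro i _
    apply Continuous.pow
    unfold Matrix.mulVec dotProduct
    apply continuous_finset_sum
    intro j _
    exact continuous_const.mul ((continuous_apply j).comp (PiLp.continuous_ofLp 2 _))
  have hne : (Metric.sphere (0:E) 1).Nonempty := by
    haveI : Nontrivial E := by
      refine ⟨0, EuclideanSpace.single ⟨0, hk⟩ 1, fun hc => ?_⟩
      have := congrArg (fun f : E => f ⟨0, hk⟩) hc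
      simp [EuclideanSpace.single_apply] at this
    exact NormedSpace.sphere_nonempty.2 zero_le_one
  obtain ⟨v₀, hv₀mem, hmin⟩ := (isCompact_sphere (0:E) 1).exists_isMinOn hne hcont.continuousOn
  have hv₀ : ‖v₀‖ = 1 := mem_sphere_zero_iff_norm.1 hv₀mem
  have hAv₀ : A.mulVec (fun i => v₀ i) ≠ 0 := by
    intro hc
    have h1 : (Aᵀ * A).mulVec (fun i => v₀ i) = 0 := by
      rw [← mulVec_mulVec, hc, mulVec_zero]
    have h2 : (fun i => v₀ i) = (0 : Fin k → ℝ) := by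
      have := congrArg ((Aᵀ * A)⁻¹.mulVec) h1
      rwa [mulVec_mulVec, Matrix.nonsing_inv_mul _ hfull, one_mulVec, mulVec_zero] at this
    have : norm2 (fun i => v₀ i) = 1 := by rw [norm2_eq_norm', hv₀]
    rw [h2] at this
    simp [norm2] at this
  have hpos : 0 < norm2 (A.mulVec (fun i => v₀ i)) := norm2_pos' hAv₀
  apply lt_of_lt_of_le hpos
  apply le_csInf
  · exact ⟨norm2 (A.mulVec (fun i => v₀ i)), fun i => v₀ i, by rw [norm2_eq_norm', hv₀], rfl⟩
  · rintro t ⟨v, hv1, rfl⟩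
    have hvE : ((WithLp.equiv 2 (Fin k → ℝ)).symm v : E) ∈ Metric.sphere (0:E) 1 := by
      rw [mem_sphere_zero_iff_norm, ← norm2_eq_norm']
      exact hv1
    have := hmin hvE
    simpa using this

lemma c_formula' (p lam : ℕ) (hlam : 0 < lam) (β : ℝ) (hβ : 1 < β)
    (H : Matrix (Fin p × Fin lam) (Fin p × Fin lam) ℝ)
    (hH : H = fun a b => if a.1 = b.1 then
        (if a.2 = b.2 then 1 else if (a.2:ℕ) = (b.2:ℕ) + 1 then -β else 0) else 0)
    (V : Matrix (Fin p) (Fin p × Fin lam) ℝ)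
    (hV : V = fun a b => if a = b.1 then β ^ (-((b.2:ℕ):ℤ) - 1) else 0)
    (u : Fin p × Fin lam → ℝ) (a : Fin p) :
    (V.mulVec (H.mulVec u)) a = β^(-(lam:ℤ)) * u (a, ⟨lam-1, by omega⟩) := by
  have hβ0 : (0:ℝ) < β := lt_trans one_pos hβ
  have hβne : β ≠ 0 := ne_of_gt hβ0
  have hHu : ∀ j : Fin lam, (H.mulVec u) (a, j) =
      u (a,j) - (if hj : 0 < (j:ℕ) then β * u (a, ⟨(j:ℕ)-1, by omega⟩) else 0) := by
    intro j
    simp only [hH, Matrix.mulVec, dotProduct, Fintype.sum_prod_type,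
      ite_mul, zero_mul, Finset.sum_ite_irrel, Finset.sum_const_zero, Finset.sum_ite_eq,
      Finset.mem_univ, if_true]
    have hsp : ∀ x : Fin lam, (if j = x then 1 * u (a,x) else if (j:ℕ) = (x:ℕ)+1 then -β * u (a,x) else 0)
        = (if j = x then u (a,x) else 0) + (if (j:ℕ) = (x:ℕ)+1 then -β * u (a,x) else 0) := by
      intro x
      by_cases h1 : j = x
      · subst h1; simp
      · simp [h1]
    rw [Finset.sum_congr rfl (fun x _ => hsp x), Finset.sum_add_distrib, Finset.sum_ite_eq,
      if_pos (Finset.mem_univ j)]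
    by_cases hj : 0 < (j:ℕ)
    · rw [dif_pos hj, Finset.sum_eq_single (⟨(j:ℕ)-1, by omega⟩ : Fin lam)]
      · rw [if_pos (by simp; omega)]; ring
      · intro x _ hx
        rw [if_neg]
        intro hcon
        exact hx (Fin.ext (by simp at hcon ⊢; omega))
      · intro hcon; exact absurd (Finset.mem_univ _) hcon
    · rw [dif_neg hj, Finset.sum_eq_zero (fun x _ => by rw [if_neg (by omega)])]
      ring
  have houter : (V.mulVec (H.mulVec u)) a
      = ∑ j : Fin lam, β ^ (-((j:ℕ):ℤ) - 1) * (H.mulVec u) (a, j) := by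
    simp only [hV, Matrix.mulVec, dotProduct, Fintype.sum_prod_type,
      ite_mul, zero_mul, Finset.sum_ite_irrel, Finset.sum_const_zero, Finset.sum_ite_eq,
      Finset.mem_univ, if_true]
  rw [houter]
  set G : ℕ → ℝ := fun n => if hn : 0 < n ∧ n ≤ lam then β^(-(n:ℤ)) * u (a, ⟨n-1, by omega⟩) else 0 with hG
  have hterm : ∀ j : Fin lam, β ^ (-((j:ℕ):ℤ) - 1) * (H.mulVec u) (a, j) = G ((j:ℕ)+1) - G (j:ℕ) := by
    intro j
    rw [hHu j]
    have hGj1 : G ((j:ℕ)+1) = β^(-((j:ℕ):ℤ)-1) * u (a, j) := by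
      simp only [hG]
      rw [dif_pos ⟨Nat.succ_pos _, j.isLt⟩]
      congr 1
      congr 1
      push_cast; ring
    by_cases hj : 0 < (j:ℕ)
    · rw [dif_pos hj, hGj1]
      simp only [hG]
      rw [dif_pos ⟨hj, le_of_lt j.isLt⟩]
      have hz : β ^ (-((j:ℕ):ℤ) - 1) * β = β ^ (-((j:ℕ):ℤ)) := by
        rw [← zpow_add_one₀ hβne]; congr 1; ring
      rw [mul_sub, ← mul_assoc, hz]
    · rw [dif_neg hj, hGj1]
      simp only [hG]
      rw [dif_neg (by omega)]
      ring
  rw [Finset.sum_congr rfl (fun j _ => hterm j), Fin.sum_univ_eq_sum_range (fun n => G (n+1) - G n),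
    Finset.sum_range_sub G]
  simp only [hG]
  rw [dif_pos ⟨hlam, le_refl lam⟩, dif_neg (by omega)]
  ring

/-- beta-dual reconstruction error bound. -/
theorem stmt_12 (p lam k : ℕ) (hp : 0 < p) (hlam : 0 < lam) (β : ℝ) (hβ : 1 < β)
    (H : Matrix (Fin p × Fin lam) (Fin p × Fin lam) ℝ)
    (hH : H = fun a b => if a.1 = b.1 then
        (if a.2 = b.2 then 1 else if (a.2:ℕ) = (b.2:ℕ) + 1 then -β else 0) else 0)
    (V : Matrix (Fin p) (Fin p × Fin lam) ℝ)
    (hV : V = fun a b => if a = b.1 then β ^ (-((b.2:ℕ):ℤ) - 1) else 0)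
    (Φ : Matrix (Fin p × Fin lam) (Fin k) ℝ)
    (hfull : IsUnit ((V * Φ)ᵀ * (V * Φ)).det)
    (x : Fin k → ℝ) (q u : Fin p × Fin lam → ℝ)
    (h : Φ.mulVec x - q = H.mulVec u) :
    norm2 (x - (pinv (V * Φ) * V).mulVec q) ≤
      Real.sqrt p * normInf u / sigmaMin (V * Φ) * β ^ (-(lam:ℤ)) := by
  have hβ0 : (0:ℝ) < β := lt_trans one_pos hβ
  set A := V * Φ with hA
  have hbdd : BddAbove {t | ∃ i : Fin p × Fin lam, t = |u i|} := by
    have hs : {t | ∃ i : Fin p × Fin lam, t = |u i|} = Set.range (fun i => |u i|) := by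
      ext t; simp [eq_comm]
    rw [hs]; exact (Set.finite_range _).bddAbove
  have hMub : ∀ b, |u b| ≤ normInf u := fun b => le_csSup hbdd ⟨b, rfl⟩
  set M := normInf u with hM
  have hMnn : 0 ≤ M := Real.sSup_nonneg (by rintro t ⟨i, rfl⟩; exact abs_nonneg _)
  have hσnn : 0 ≤ sigmaMin A := Real.sInf_nonneg (by rintro t ⟨v, hv, rfl⟩; exact norm2_nonneg' _)
  have hβl : (0:ℝ) < β ^ (-(lam:ℤ)) := zpow_pos hβ0 _
  set c := (V * H).mulVec u with hc
  have hcf : ∀ a : Fin p, c a = β^(-(lam:ℤ)) * u (a, ⟨lam-1, by omega⟩) := by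
    intro a
    rw [hc, ← mulVec_mulVec]
    exact c_formula' p lam hlam β hβ H hH V hV u a
  have hcbound : norm2 c ≤ Real.sqrt p * (β^(-(lam:ℤ)) * M) := by
    have h1 : ∑ a, (c a)^2 ≤ ∑ _a : Fin p, (β^(-(lam:ℤ)) * M)^2 := by
      apply Finset.sum_le_sum
      intro a _
      rw [hcf a, mul_pow, mul_pow]
      apply mul_le_mul_of_nonneg_left _ (sq_nonneg _)
      rw [← sq_abs]
      exact pow_le_pow_left₀ (abs_nonneg _) (hMub _) 2
    have h2 : norm2 c ≤ Real.sqrt (∑ _a : Fin p, (β^(-(lam:ℤ)) * M)^2) := Real.sqrt_le_sqrt h1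
    calc norm2 c ≤ Real.sqrt (∑ _a : Fin p, (β^(-(lam:ℤ)) * M)^2) := h2
      _ = Real.sqrt ((p : ℝ) * (β^(-(lam:ℤ)) * M)^2) := by
          rw [Finset.sum_const, Finset.card_univ, Fintype.card_fin, nsmul_eq_mul]
      _ = Real.sqrt p * (β^(-(lam:ℤ)) * M) := by
          rw [Real.sqrt_mul (Nat.cast_nonneg p), Real.sqrt_sq (by positivity)]
  have hpinvA : pinv A * A = 1 := by
    rw [pinv, Matrix.mul_assoc]
    exact Matrix.nonsing_inv_mul _ hfull
  set y := x - (pinv A * V).mulVec q with hy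
  have hyc : y = (pinv A).mulVec c := by
    have e1 : c = V.mulVec (H.mulVec u) := by rw [hc, ← mulVec_mulVec]
    have e2 : V.mulVec (H.mulVec u) = A.mulVec x - V.mulVec q := by
      rw [← h, mulVec_sub, hA, ← mulVec_mulVec]
    rw [e1, e2, mulVec_sub, mulVec_mulVec, mulVec_mulVec, hpinvA, one_mulVec, hy]
  have hsymAA : (Aᵀ*A)ᵀ = Aᵀ*A := by rw [transpose_mul, transpose_transpose]
  have hP : norm2 (A.mulVec y) ≤ norm2 c := by
    rw [hyc, mulVec_mulVec]
    apply proj_contract'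
    · rw [pinv, transpose_mul, transpose_mul, transpose_transpose, transpose_nonsing_inv,
        hsymAA, Matrix.mul_assoc]
    · rw [pinv]
      calc A * ((Aᵀ*A)⁻¹ * Aᵀ) * (A * ((Aᵀ*A)⁻¹ * Aᵀ))
          = A * ((Aᵀ*A)⁻¹ * ((Aᵀ*A) * ((Aᵀ*A)⁻¹ * Aᵀ))) := by
            simp only [Matrix.mul_assoc]
        _ = A * ((Aᵀ*A)⁻¹ * Aᵀ) := by
            rw [Matrix.nonsing_inv_mul_cancel_left _ _ hfull]
  rcases Nat.eq_zero_or_pos k with hk0 | hk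
  · subst hk0
    have hz : norm2 y = 0 := by simp [norm2]
    rw [hz]
    exact mul_nonneg (div_nonneg (mul_nonneg (Real.sqrt_nonneg _) hMnn) hσnn) (le_of_lt hβl)
  · have hσpos : 0 < sigmaMin A := sigmaMin_pos' hk A hfull
    have hstep : sigmaMin A * norm2 y ≤ norm2 c := by
      rcases eq_or_ne y 0 with h0 | h0
      · have : norm2 (0 : Fin k → ℝ) = 0 := by simp [norm2]
        rw [h0, this, mul_zero]
        exact norm2_nonneg' c
      · have ht : 0 < norm2 y := norm2_pos' h0
        have hv1 : norm2 ((norm2 y)⁻¹ • y) = 1 := by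
          rw [norm2_smul', abs_of_pos (inv_pos.2 ht), inv_mul_cancel₀ (ne_of_gt ht)]
        have hle : sigmaMin A ≤ norm2 (A.mulVec ((norm2 y)⁻¹ • y)) :=
          csInf_le ⟨0, by rintro t ⟨v, _, rfl⟩; exact norm2_nonneg' _⟩ ⟨_, hv1, rfl⟩
        rw [Matrix.mulVec_smul, norm2_smul', abs_of_pos (inv_pos.2 ht)] at hle
        calc sigmaMin A * norm2 y ≤ ((norm2 y)⁻¹ * norm2 (A.mulVec y)) * norm2 y :=
              mul_le_mul_of_nonneg_right hle ht.le
          _ = norm2 (A.mulVec y) := by field_simp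
          _ ≤ norm2 c := hP
    rw [div_mul_eq_mul_div, le_div_iff₀ hσpos]
    calc norm2 y * sigmaMin A = sigmaMin A * norm2 y := mul_comm _ _
      _ ≤ norm2 c := hstep
      _ ≤ Real.sqrt p * (β^(-(lam:ℤ)) * M) := hcbound
      _ = Real.sqrt p * M * β^(-(lam:ℤ)) := by ring
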